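/- Let n ∈ ℕ, let a_1, …, a_n > 0 and Z_1, …, Z_n > 0 be real numbers, let λ > 0, let c ∈ (0,1), let s ∈ ℕ with s ≥ 1, and let m₁, m₂ be indices with 0 ≤ m₁ < m₂ ≤ n+1 such that λZ_i < c for all i ≤ m₁ and λZ_i > c⁻¹ for all i ≥ m₂. Define g(λ) = Σ_{i=1}^n log a_i + Σ_{i=1}^n log(1 + λZ_i), a = Σ_{i=1}^n log a_i, b = Σ_{j=m₂}^{n} log Z_j, U_r = Σ_{j=1}^{m₁} Z_j^r, and V_r = Σ_{j=m₂}^{n} Z_j^{−r}. Then there exists E ∈ ℝ with |E| ≤ n · c^{s+1} such that g(λ) = a + b + (n − m₂ + 1)·log λ + Σ_{i=m₁+1}^{m₂−1} log(1 + λZ_i) + Σ_{r=1}^{s} ((−1)^{r−1}/r) λ^r U_r + Σ_{r=1}^{s} ((−1)^{r−1}/r) λ^{−r} V_r + E. -/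

import Mathlib

/-!
Split the indices into the small block `λZᵢ < c`, the middle block and the large block
`λZᵢ > c⁻¹`. On the small block expand `log (1 + λZᵢ)` by its Taylor polynomial of order `s`;
on the large block write `log (1 + λZᵢ) = log λ + log Zᵢ + log (1 + (λZᵢ)⁻¹)` and expand the last
term in `(λZᵢ)⁻¹`. For `0 ≤ x` the remainder `log (1 + x) - logTaylor s x` has derivative
`(-x)ˢ / (1 + x)`, so it is at most `xˢ⁺¹ ≤ cˢ⁺¹` in absolute value, and there are at most `n`
remainders.
-/

open Finset Real

noncomputable def logTaylor (s : ℕ) (x : ℝ) : ℝ :=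
  ∑ r ∈ Icc 1 s, ((-1 : ℝ) ^ (r - 1) / (r : ℝ)) * x ^ r

lemma hasDerivAt_logTaylor (s : ℕ) (t : ℝ) :
    HasDerivAt (logTaylor s) (∑ k ∈ range s, (-t) ^ k) t := by
  refine (HasDerivAt.fun_sum (u := Icc 1 s) fun r _ =>
    (hasDerivAt_pow r t).const_mul ((-1 : ℝ) ^ (r - 1) / (r : ℝ))).congr_deriv ?_
  rw [show Icc 1 s = Ico 1 (s + 1) from rfl, sum_Ico_eq_sum_range, Nat.add_sub_cancel]
  refine sum_congr rfl fun k _ => ?_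
  rw [Nat.add_sub_cancel_left, neg_pow t]
  field_simp

lemma hasDerivAt_log_one_add_sub_logTaylor (s : ℕ) {t : ℝ} (ht : 1 + t ≠ 0) :
    HasDerivAt (fun x => log (1 + x) - logTaylor s x) ((-t) ^ s / (1 + t)) t := by
  have hlog : HasDerivAt (fun x => log (1 + x)) (1 / (1 + t)) t := by
    simpa using ((hasDerivAt_id t).const_add 1).log ht
  refine (hlog.sub (hasDerivAt_logTaylor s t)).congr_deriv ?_
  have hgeom := geom_sum_mul (-t) s
  field_simp
  linear_combination hgeom

lemma abs_log_one_add_sub_logTaylor_le (s : ℕ) {x : ℝ} (hx : 0 ≤ x) :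
    |log (1 + x) - logTaylor s x| ≤ x ^ (s + 1) := by
  have hderiv : ∀ t ∈ Set.Icc 0 x, HasDerivWithinAt (fun x => log (1 + x) - logTaylor s x)
      ((-t) ^ s / (1 + t)) (Set.Icc 0 x) t := fun t ht =>
    (hasDerivAt_log_one_add_sub_logTaylor s (by linarith [ht.1])).hasDerivWithinAt
  have hbound : ∀ t ∈ Set.Icc 0 x, ‖(-t) ^ s / (1 + t)‖ ≤ x ^ s := by
    rintro t ⟨ht0, htx⟩
    rw [Real.norm_eq_abs, abs_div, abs_pow, abs_neg, abs_of_nonneg ht0,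
      abs_of_pos (by linarith)]
    calc t ^ s / (1 + t) ≤ t ^ s := div_le_self (by positivity) (by linarith)
      _ ≤ x ^ s := by gcongr
  have hzero : logTaylor s 0 = 0 :=
    sum_eq_zero fun r hr => by rw [zero_pow (by grind), mul_zero]
  have := Convex.norm_image_sub_le_of_norm_hasDerivWithin_le hderiv hbound (convex_Icc 0 x)
    (Set.left_mem_Icc.mpr hx) (Set.right_mem_Icc.mpr hx)
  simpa [hzero, abs_of_nonneg hx, pow_succ] using this

lemma abs_sum_log_one_add_sub_logTaylor_le {ι : Type*} (S : Finset ι) (f : ι → ℝ) (s : ℕ)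
    {c : ℝ} (hf : ∀ i ∈ S, 0 ≤ f i ∧ f i ≤ c) :
    |∑ i ∈ S, (log (1 + f i) - logTaylor s (f i))| ≤ #S * c ^ (s + 1) := by
  refine (abs_sum_le_sum_abs _ _).trans ?_
  rw [← nsmul_eq_mul]
  refine sum_le_card_nsmul _ _ _ fun i hi => ?_
  obtain ⟨hf0, hfc⟩ := hf i hi
  exact (abs_log_one_add_sub_logTaylor_le s hf0).trans (by gcongr)

lemma sum_logTaylor_mul {ι : Type*} (S : Finset ι) (s : ℕ) (lam : ℝ) (z : ι → ℝ) :
    ∑ i ∈ S, logTaylor s (lam * z i)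
      = ∑ r ∈ Icc 1 s, ((-1 : ℝ) ^ (r - 1) / (r : ℝ)) * lam ^ r * ∑ i ∈ S, z i ^ r := by
  simp only [logTaylor, mul_pow, mul_sum]
  rw [sum_comm]
  exact sum_congr rfl fun r _ => sum_congr rfl fun i _ => by ring

lemma log_one_add_eq_log_add_log_one_add_inv {x : ℝ} (hx : 0 < x) :
    log (1 + x) = log x + log (1 + x⁻¹) := by
  rw [← log_mul hx.ne' (by positivity), mul_add, mul_inv_cancel₀ hx.ne', mul_one, add_comm]

lemma sum_log_one_add_mul_eq_of_pos {ι : Type*} (S : Finset ι) (s : ℕ) {lam : ℝ}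
    (hlam : 0 < lam) {z : ι → ℝ} (hz : ∀ i ∈ S, 0 < z i) :
    ∑ i ∈ S, log (1 + lam * z i)
      = #S * log lam + ∑ i ∈ S, log (z i)
        + ∑ r ∈ Icc 1 s, ((-1 : ℝ) ^ (r - 1) / (r : ℝ)) * (lam ^ r)⁻¹ * ∑ i ∈ S, (z i ^ r)⁻¹
        + ∑ i ∈ S, (log (1 + (lam * z i)⁻¹) - logTaylor s (lam * z i)⁻¹) := by
  have hterm : ∀ i ∈ S, log (1 + lam * z i)
      = log lam + log (z i) + log (1 + (lam * z i)⁻¹) := fun i hi => by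
    rw [log_one_add_eq_log_add_log_one_add_inv (mul_pos hlam (hz i hi)),
      log_mul hlam.ne' (hz i hi).ne']
  have hinv : ∑ i ∈ S, logTaylor s (lam * z i)⁻¹
      = ∑ r ∈ Icc 1 s, ((-1 : ℝ) ^ (r - 1) / (r : ℝ)) * (lam ^ r)⁻¹ * ∑ i ∈ S, (z i ^ r)⁻¹ := by
    simp only [mul_inv, sum_logTaylor_mul, inv_pow]
  rw [sum_congr rfl hterm, sum_add_distrib, sum_add_distrib, sum_const, nsmul_eq_mul, ← hinv,
    sum_sub_distrib]
  ring

lemma sum_Icc_one_eq_add_add {M : Type*} [AddCommMonoid M] (f : ℕ → M) {n m₁ m₂ : ℕ}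
    (hm : m₁ < m₂) (hm₂ : m₂ ≤ n + 1) :
    ∑ i ∈ Icc 1 n, f i
      = ∑ i ∈ Icc 1 m₁, f i + ∑ i ∈ Icc (m₁ + 1) (m₂ - 1), f i + ∑ i ∈ Icc m₂ n, f i := by
  obtain ⟨k, rfl⟩ : ∃ k, m₂ = k + 1 := ⟨m₂ - 1, by omega⟩
  show ∑ i ∈ Icc (0 + 1) n, f i = ∑ i ∈ Icc (0 + 1) m₁, f i + ∑ i ∈ Icc (m₁ + 1) (k + 1 - 1), f i
    + ∑ i ∈ Icc (k + 1) n, f i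
  rw [Nat.add_sub_cancel]
  simp only [Icc_add_one_left_eq_Ioc]
  rw [sum_Ioc_consecutive _ (Nat.zero_le m₁) (by omega),
    sum_Ioc_consecutive _ (Nat.zero_le k) (by omega)]

theorem g_expansion_general
    (n : ℕ) (a Z : ℕ → ℝ)
    (hZ : ∀ i ∈ Icc 1 n, 0 < Z i)
    (lam : ℝ) (hlam : 0 < lam)
    (c : ℝ) (hc0 : 0 < c)
    (s : ℕ)
    (m₁ m₂ : ℕ) (hm : m₁ < m₂) (hm₂ : m₂ ≤ n + 1)
    (hsmall : ∀ i, 1 ≤ i → i ≤ m₁ → lam * Z i < c)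
    (hlarge : ∀ i, m₂ ≤ i → i ≤ n → lam * Z i > c⁻¹)
    (g : ℝ)
    (hg : g = (∑ i ∈ Icc 1 n, Real.log (a i)) + ∑ i ∈ Icc 1 n, Real.log (1 + lam * Z i))
    (A b : ℝ)
    (hA : A = ∑ i ∈ Icc 1 n, Real.log (a i))
    (hb : b = ∑ j ∈ Icc m₂ n, Real.log (Z j))
    (U V : ℕ → ℝ)
    (hU : ∀ r, U r = ∑ j ∈ Icc 1 m₁, Z j ^ r)
    (hV : ∀ r, V r = ∑ j ∈ Icc m₂ n, (Z j ^ r)⁻¹) :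
    ∃ E : ℝ, |E| ≤ (n : ℝ) * c ^ (s + 1) ∧
      g = A + b + ((n : ℝ) - (m₂ : ℝ) + 1) * Real.log lam
          + (∑ i ∈ Icc (m₁ + 1) (m₂ - 1), Real.log (1 + lam * Z i))
          + (∑ r ∈ Icc 1 s, ((-1 : ℝ) ^ (r - 1) / (r : ℝ)) * lam ^ r * U r)
          + (∑ r ∈ Icc 1 s, ((-1 : ℝ) ^ (r - 1) / (r : ℝ)) * (lam ^ r)⁻¹ * V r)
          + E := by
  have hZ₁ : ∀ i ∈ Icc 1 m₁, 0 ≤ lam * Z i ∧ lam * Z i ≤ c := fun i hi => by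
    obtain ⟨h1, him⟩ := mem_Icc.mp hi
    exact ⟨(mul_pos hlam (hZ i (mem_Icc.mpr ⟨h1, by omega⟩))).le, (hsmall i h1 him).le⟩
  have hZ₂ : ∀ i ∈ Icc m₂ n, 0 < Z i := fun i hi => by
    obtain ⟨hmi, hin⟩ := mem_Icc.mp hi
    exact hZ i (mem_Icc.mpr ⟨by omega, hin⟩)
  have hZ₂' : ∀ i ∈ Icc m₂ n, 0 ≤ (lam * Z i)⁻¹ ∧ (lam * Z i)⁻¹ ≤ c := fun i hi => by
    obtain ⟨hmi, hin⟩ := mem_Icc.mp hi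
    exact ⟨inv_nonneg.mpr (mul_pos hlam (hZ₂ i hi)).le,
      (inv_lt_of_inv_lt₀ hc0 (hlarge i hmi hin)).le⟩
  have hcard : ((n + 1 - m₂ : ℕ) : ℝ) = n - m₂ + 1 := by
    push_cast [Nat.cast_sub hm₂]
    ring
  refine ⟨∑ i ∈ Icc 1 m₁, (log (1 + lam * Z i) - logTaylor s (lam * Z i))
      + ∑ i ∈ Icc m₂ n, (log (1 + (lam * Z i)⁻¹) - logTaylor s (lam * Z i)⁻¹), ?_, ?_⟩
  · have hcount : (m₁ : ℝ) + (n + 1 - m₂ : ℕ) ≤ n := by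
      exact_mod_cast (by omega : m₁ + (n + 1 - m₂) ≤ n)
    refine (abs_add_le _ _).trans ?_
    grw [abs_sum_log_one_add_sub_logTaylor_le _ _ s hZ₁,
      abs_sum_log_one_add_sub_logTaylor_le _ _ s hZ₂', Nat.card_Icc, Nat.card_Icc,
      Nat.add_sub_cancel, ← add_mul, hcount]
  · simp only [hU, hV]
    rw [hg, hA, hb, sum_Icc_one_eq_add_add (fun i => log (1 + lam * Z i)) hm hm₂,
      sum_log_one_add_mul_eq_of_pos _ s hlam hZ₂, ← sum_logTaylor_mul, Nat.card_Icc, hcard]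
    simp only [sum_sub_distrib]
    ring

/-- Second Appendix lemma of the paper: expansion of
`g(λ) = Σᵢ log aᵢ + Σᵢ log(1+λZᵢ)` in `log λ` and in powers of `λ` (over indices with
`λZᵢ < c`) and `λ⁻¹` (over indices with `λZᵢ > c⁻¹`), with error bound `|E| ≤ n c^(s+1)`. -/
theorem g_expansion
    (n : ℕ) (a Z : ℕ → ℝ)
    (ha : ∀ i ∈ Icc 1 n, 0 < a i) (hZ : ∀ i ∈ Icc 1 n, 0 < Z i)
    (lam : ℝ) (hlam : 0 < lam)
    (c : ℝ) (hc0 : 0 < c) (hc1 : c < 1)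
    (s : ℕ) (hs : 1 ≤ s)
    (m₁ m₂ : ℕ) (hm : m₁ < m₂) (hm₂ : m₂ ≤ n + 1)
    (hsmall : ∀ i, 1 ≤ i → i ≤ m₁ → lam * Z i < c)
    (hlarge : ∀ i, m₂ ≤ i → i ≤ n → lam * Z i > c⁻¹)
    (g : ℝ)
    (hg : g = (∑ i ∈ Icc 1 n, Real.log (a i)) + ∑ i ∈ Icc 1 n, Real.log (1 + lam * Z i))
    (A b : ℝ)
    (hA : A = ∑ i ∈ Icc 1 n, Real.log (a i))
    (hb : b = ∑ j ∈ Icc m₂ n, Real.log (Z j))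
    (U V : ℕ → ℝ)
    (hU : ∀ r, U r = ∑ j ∈ Icc 1 m₁, Z j ^ r)
    (hV : ∀ r, V r = ∑ j ∈ Icc m₂ n, (Z j ^ r)⁻¹) :
    ∃ E : ℝ, |E| ≤ (n : ℝ) * c ^ (s + 1) ∧
      g = A + b + ((n : ℝ) - (m₂ : ℝ) + 1) * Real.log lam
          + (∑ i ∈ Icc (m₁ + 1) (m₂ - 1), Real.log (1 + lam * Z i))
          + (∑ r ∈ Icc 1 s, ((-1 : ℝ) ^ (r - 1) / (r : ℝ)) * lam ^ r * U r)
          + (∑ r ∈ Icc 1 s, ((-1 : ℝ) ^ (r - 1) / (r : ℝ)) * (lam ^ r)⁻¹ * V r)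
          + E :=
  g_expansion_general n a Z hZ lam hlam c hc0 s m₁ m₂ hm hm₂ hsmall hlarge g hg A b hA hb U V hU hV
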